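/- Let Π = (Σ_in, Σ_out, P) be an LCL problem in normal form, 𝓘 : ℤ → Σ_in an input labeling, and P an equivalence class of ℜ on the input graph G_𝓘 that contains a doubly infinite directed path. Then for every (i,a) ∈ P, the sets ((⋃_{j ≥ i} G_𝓘[j]) ∩ P) \ r_{(i,a)} and ((⋃_{j ≤ i} G_𝓘[j]) ∩ P) \ l_{(i,a)} are finite. -/

import Mathlib

section InputGraph

variable {Sin Sout : Type}

/-- The edge relation of the input graph `G_𝓘` on `ℤ × Σout`: there is an edge from
`(i, a)` to `(i + 1, b)` iff `P (𝓘 i) (𝓘 (i+1)) a b` holds. -/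
def InputEdge (P : Sin → Sin → Sout → Sout → Prop) (I : ℤ → Sin)
    (u v : ℤ × Sout) : Prop :=
  v.1 = u.1 + 1 ∧ P (I u.1) (I v.1) u.2 v.2

/-- `r_u`: the set of vertices reachable from `u` by a directed path in `G_𝓘`. -/
def rset (P : Sin → Sin → Sout → Sout → Prop) (I : ℤ → Sin) (u : ℤ × Sout) :
    Set (ℤ × Sout) :=
  {v | Relation.ReflTransGen (InputEdge P I) u v}

/-- `l_u`: the set of vertices from which `u` is reachable by a directed path in `G_𝓘`. -/
def lset (P : Sin → Sin → Sout → Sout → Prop) (I : ℤ → Sin) (u : ℤ × Sout) :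
    Set (ℤ × Sout) :=
  {v | Relation.ReflTransGen (InputEdge P I) v u}

/-- `u ≈⁺ v` iff the symmetric difference `r_u Δ r_v` is finite. -/
def RPlus (P : Sin → Sin → Sout → Sout → Prop) (I : ℤ → Sin)
    (u v : ℤ × Sout) : Prop :=
  (symmDiff (rset P I u) (rset P I v)).Finite

/-- `u ≈⁻ v` iff the symmetric difference `l_u Δ l_v` is finite. -/
def RMinus (P : Sin → Sin → Sout → Sout → Prop) (I : ℤ → Sin)
    (u v : ℤ × Sout) : Prop :=
  (symmDiff (lset P I u) (lset P I v)).Finite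

/-- The equivalence relation `ℜ`, the intersection of `≈⁺` and `≈⁻`. -/
def RRel (P : Sin → Sin → Sout → Sout → Prop) (I : ℤ → Sin)
    (u v : ℤ × Sout) : Prop :=
  RPlus P I u v ∧ RMinus P I u v

end InputGraph

/-!
Let `C` be the `ℜ`-class containing the doubly infinite path `q`. A vertex `v ∈ C` is reachable
from some `q m`: otherwise the infinitely many `q m` with `m ≤ 0` would all lie in `l_{q 0} \ l_v`,
which is finite because `q 0 ≈⁻ v`. Fix a slice `s`. The sets of labels `a` with `(s, a)`
reachable from `q k` grow as `k` decreases, so, `Σ_out` being finite, they stabilise at some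
`q k₀`; a path from `q m` to a vertex `v ∈ C` beyond slice `s` crosses slice `s`, hence `v` is
reachable from `q k₀`. Taking `s` to be the slice of `u ∈ C`, the vertices of `C` beyond `u` that
`u` does not reach lie in `r_{q k₀} \ r_u`, which is finite because `q k₀ ≈⁺ u`. The statement
about `l_u` is the same statement for the graph with all edges reversed.
-/

open Relation Set Function
open scoped symmDiff

theorem Set.Finite.diff_of_symmDiff {α : Type*} {s t u : Set α} (hst : (s ∆ t).Finite)
    (hsu : (s ∆ u).Finite) : (t \ u).Finite :=
  (hst.union hsu).subset <| (le_sup_left : t \ u ≤ t ∆ u).trans <| by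
    rw [symmDiff_comm s t]; exact symmDiff_triangle t s u

theorem Function.Involutive.finite_preimage_iff {α : Type*} {f : α → α} (hf : Involutive f)
    {s : Set α} : (f ⁻¹' s).Finite ↔ s.Finite :=
  ⟨fun h => h.of_preimage hf.surjective, fun h => h.preimage hf.injective.injOn⟩

theorem Function.Involutive.reflTransGen_apply_iff {α : Type*} {f : α → α} (hf : Involutive f)
    {r p : α → α → Prop} (h : ∀ a b, r (f a) (f b) ↔ p a b) {a b : α} :
    ReflTransGen r (f a) (f b) ↔ ReflTransGen p a b := by
  refine ⟨fun hab => ?_, ReflTransGen.lift f (fun a b hab => (h a b).2 hab) a b⟩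
  rw [← hf a, ← hf b]
  exact ReflTransGen.lift f (fun a b hab => (h _ _).1 (by rwa [hf a, hf b])) _ _ hab

theorem Directed.exists_forall_subset {ι α : Type*} [Nonempty ι] [Finite α] {f : ι → Set α}
    (hf : Directed (· ⊆ ·) f) : ∃ k₀, ∀ k, f k ⊆ f k₀ := by
  choose g hg using fun a : ⋃ k, f k => mem_iUnion.1 a.2
  obtain ⟨k₀, hk₀⟩ := hf.finite_le g
  exact ⟨k₀, fun k a ha => hk₀ ⟨a, mem_iUnion.2 ⟨k, ha⟩⟩ (hg _)⟩

theorem exists_reflTransGen_through_slice {α : Type*} {r : ℤ × α → ℤ × α → Prop}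
    (hr : ∀ u v, r u v → v.1 = u.1 + 1) {u v : ℤ × α} (h : ReflTransGen r u v) {s : ℤ}
    (hus : u.1 ≤ s) (hsv : s ≤ v.1) : ∃ a, ReflTransGen r u (s, a) ∧ ReflTransGen r (s, a) v := by
  induction h with
  | refl =>
    obtain rfl : s = u.1 := le_antisymm hsv hus
    exact ⟨u.2, .refl, .refl⟩
  | @tail b c hub hbc ih =>
    rcases hsv.lt_or_eq with hsc | rfl
    · obtain ⟨a, hua, hab⟩ := ih (by rw [hr _ _ hbc] at hsc; omega)
      exact ⟨a, hua, hab.tail hbc⟩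
    · exact ⟨c.2, hub.tail hbc, .refl⟩

section Path

variable {Sin Sout : Type} {P : Sin → Sin → Sout → Sout → Prop} {I : ℤ → Sin}
  {q : ℤ → ℤ × Sout} (hqe : ∀ n, InputEdge P I (q n) (q (n + 1)))
include hqe

theorem path_fst_eq (n : ℤ) : (q n).1 = (q 0).1 + n := by
  induction n using Int.induction_on with
  | zero => simp
  | succ n ih => rw [(hqe n).1, ih]; ring
  | pred n ih =>
    have h := (hqe (-n - 1)).1
    rw [sub_add_cancel] at h
    omega

theorem path_injective : Injective q := fun m n h => by
  have := congrArg Prod.fst h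
  rw [path_fst_eq hqe m, path_fst_eq hqe n] at this
  omega

theorem reflTransGen_path {m n : ℤ} (hmn : m ≤ n) : ReflTransGen (InputEdge P I) (q m) (q n) :=
  ReflTransGen.lift q (fun _ _ h => h) _ _ <|
    reflTransGen_of_succ_of_le (fun i j => InputEdge P I (q i) (q j))
      (fun i _ => by simpa only [Order.succ_eq_add_one] using hqe i) hmn

theorem exists_path_mem_lset {v : ℤ × Sout} (hv : (lset P I (q 0) \ lset P I v).Finite) :
    ∃ m, q m ∈ lset P I v := by
  by_contra! hnot
  refine ((Iic_infinite 0).image (path_injective hqe).injOn) (hv.subset ?_)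
  rintro _ ⟨m, hm, rfl⟩
  exact ⟨reflTransGen_path hqe hm, hnot m⟩

theorem exists_path_forall_mem_rset [Finite Sout] (s : ℤ) :
    ∃ k, ∀ v, (lset P I (q 0) \ lset P I v).Finite → s ≤ v.1 → v ∈ rset P I (q k) := by
  have hdir : Directed (· ⊆ ·) fun k => {a | (s, a) ∈ rset P I (q k)} := fun j k =>
    ⟨min j k, fun _ ha => (reflTransGen_path hqe (min_le_left j k)).trans ha,
      fun _ ha => (reflTransGen_path hqe (min_le_right j k)).trans ha⟩
  obtain ⟨k₀, hk₀⟩ := hdir.exists_forall_subset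
  set k := min k₀ (s - (q 0).1)
  refine ⟨k, fun v hv hsv => ?_⟩
  obtain ⟨m, hm⟩ := exists_path_mem_lset hqe hv
  have hreach : ReflTransGen (InputEdge P I) (q (min m k)) v :=
    (reflTransGen_path hqe (min_le_left m k)).trans hm
  have hslice : (q (min m k)).1 ≤ s := by
    rw [path_fst_eq hqe]; omega
  obtain ⟨a, hqa, hav⟩ :=
    exists_reflTransGen_through_slice (fun _ _ h => h.1) hreach hslice hsv
  exact (reflTransGen_path hqe (min_le_left k₀ _)).trans ((hk₀ _ hqa).trans hav)

end Path

section EquivalenceClass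

variable {Sin Sout : Type} {P : Sin → Sin → Sout → Sout → Prop} {I : ℤ → Sin}

theorem finite_ge_not_mem_rset [Finite Sout] {u₀ : ℤ × Sout} {q : ℤ → ℤ × Sout}
    (hq : ∀ n, RRel P I u₀ (q n)) (hqe : ∀ n, InputEdge P I (q n) (q (n + 1)))
    {u : ℤ × Sout} (hu : RRel P I u₀ u) :
    {v | RRel P I u₀ v ∧ u.1 ≤ v.1 ∧ v ∉ rset P I u}.Finite := by
  obtain ⟨k, hk⟩ := exists_path_forall_mem_rset hqe u.1
  refine ((hq k).1.diff_of_symmDiff hu.1).subset ?_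
  rintro v ⟨hv, huv, hvu⟩
  exact ⟨hk v ((hq 0).2.diff_of_symmDiff hv.2) huv, hvu⟩

def reflect {α : Type*} (u : ℤ × α) : ℤ × α := (-u.1, u.2)

theorem reflect_involutive {α : Type*} : Involutive (reflect : ℤ × α → ℤ × α) :=
  fun u => by simp [reflect]

def reverseConstraint (P : Sin → Sin → Sout → Sout → Prop) : Sin → Sin → Sout → Sout → Prop :=
  fun x y a b => P y x b a

def reverseInput (I : ℤ → Sin) : ℤ → Sin := fun i => I (-i)

theorem inputEdge_reverse {u v : ℤ × Sout} :
    InputEdge (reverseConstraint P) (reverseInput I) (reflect u) (reflect v) ↔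
      InputEdge P I v u := by
  simp only [InputEdge, reflect, reverseConstraint, reverseInput, neg_neg]
  exact and_congr_left' (by omega)

theorem rset_reverse (u : ℤ × Sout) :
    rset (reverseConstraint P) (reverseInput I) (reflect u) = reflect ⁻¹' lset P I u := by
  ext v
  conv_lhs => rw [← reflect_involutive v]
  exact (reflect_involutive.reflTransGen_apply_iff fun _ _ => inputEdge_reverse).trans
    reflTransGen_swap

theorem lset_reverse (u : ℤ × Sout) :
    lset (reverseConstraint P) (reverseInput I) (reflect u) = reflect ⁻¹' rset P I u := by
  ext v
  conv_lhs => rw [← reflect_involutive v]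
  exact (reflect_involutive.reflTransGen_apply_iff fun _ _ => inputEdge_reverse).trans
    reflTransGen_swap

theorem rRel_reverse {u v : ℤ × Sout} :
    RRel (reverseConstraint P) (reverseInput I) (reflect u) (reflect v) ↔ RRel P I u v := by
  simp only [RRel, RPlus, RMinus, rset_reverse, lset_reverse, ← preimage_symmDiff,
    reflect_involutive.finite_preimage_iff, and_comm]

theorem finite_le_not_mem_lset [Finite Sout] {u₀ : ℤ × Sout} {q : ℤ → ℤ × Sout}
    (hq : ∀ n, RRel P I u₀ (q n)) (hqe : ∀ n, InputEdge P I (q n) (q (n + 1)))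
    {u : ℤ × Sout} (hu : RRel P I u₀ u) :
    {v | RRel P I u₀ v ∧ v.1 ≤ u.1 ∧ v ∉ lset P I u}.Finite := by
  have hqe' (n : ℤ) : InputEdge (reverseConstraint P) (reverseInput I)
      (reflect (q (-n))) (reflect (q (-(n + 1)))) :=
    inputEdge_reverse.2 (by simpa using hqe (-(n + 1)))
  have hfin := finite_ge_not_mem_rset (fun n => rRel_reverse.2 (hq (-n))) hqe'
    (rRel_reverse.2 hu)
  refine (reflect_involutive.finite_preimage_iff.2 hfin).subset ?_
  rintro v ⟨hv, hvu, hvl⟩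
  refine ⟨rRel_reverse.2 hv, neg_le_neg hvu, ?_⟩
  rwa [rset_reverse, mem_preimage, reflect_involutive]

end EquivalenceClass

theorem finiteness_outside_reach_general {Sin Sout : Type}
    [Fintype Sout]
    (P : Sin → Sin → Sout → Sout → Prop)
    (I : ℤ → Sin) (u₀ : ℤ × Sout)
    (q : ℤ → ℤ × Sout) (hq : ∀ n, RRel P I u₀ (q n))
    (hqe : ∀ n, InputEdge P I (q n) (q (n + 1))) :
    ∀ u : ℤ × Sout, RRel P I u₀ u →
      ({v | RRel P I u₀ v ∧ u.1 ≤ v.1 ∧ v ∉ rset P I u}).Finite ∧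
      ({v | RRel P I u₀ v ∧ v.1 ≤ u.1 ∧ v ∉ lset P I u}).Finite :=
  fun _ hu => ⟨finite_ge_not_mem_rset hq hqe hu, finite_le_not_mem_lset hq hqe hu⟩

/-- Let `P` be the `ℜ`-class of a vertex `u₀` of `G_𝓘`, and suppose
`P` contains a doubly infinite directed path. Then for every vertex `u ∈ P`, the sets
`((⋃_{j ≥ u.1} G_𝓘[j]) ∩ P) \ r_u` and `((⋃_{j ≤ u.1} G_𝓘[j]) ∩ P) \ l_u` are finite. -/
theorem finiteness_outside_reach {Sin Sout : Type}
    [Fintype Sin] [Fintype Sout] [Nonempty Sin] [Nonempty Sout]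
    (P : Sin → Sin → Sout → Sout → Prop) [∀ a b c d, Decidable (P a b c d)]
    (I : ℤ → Sin) (u₀ : ℤ × Sout)
    (q : ℤ → ℤ × Sout) (hq : ∀ n, RRel P I u₀ (q n))
    (hqe : ∀ n, InputEdge P I (q n) (q (n + 1))) :
    ∀ u : ℤ × Sout, RRel P I u₀ u →
      ({v | RRel P I u₀ v ∧ u.1 ≤ v.1 ∧ v ∉ rset P I u}).Finite ∧
      ({v | RRel P I u₀ v ∧ v.1 ≤ u.1 ∧ v ∉ lset P I u}).Finite :=
  finiteness_outside_reach_general P I u₀ q hq hqe
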